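/- Fix P₁ > 0 and P₂ > 0 and define i₃ : ℝ³ → ℝ by i₃(x₁, x₂, y) := (1/2)·log(1 + P₁ + P₂) − (y − x₁ − x₂)²/2 + y²/(2(1 + P₁ + P₂)). Let X₁ ~ N(0, P₁), X₂ ~ N(0, P₂), and Z ~ N(0, 1) be mutually independent and set Y = X₁ + X₂ + Z. Then E[i₃(X₁, X₂, Y)] = (1/2)·log(1 + P₁ + P₂) and Var(i₃(X₁, X₂, Y)) = (P₁ + P₂)/(1 + P₁ + P₂). -/

import Mathlib

/-!
Put `W = X₁ + X₂ ~ N(0, P)` with `P = P₁ + P₂` and `S = 1 + P`, so that `Y = W + Z ~ N(0, S)` and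
`i₃(X₁, X₂, Y) - ½ log S = (Y² / S - Z²) / 2`: the sum-rate density is the information density of
the single-user channel with input `W`. The mean vanishes since `E[Y²] = S` and `E[Z²] = 1`. For the
second moment, the Gaussian fourth moments `E[Y⁴] = 3S²`, `E[Z⁴] = 3` and, by independence,
`E[Y²Z²] = E[W²] E[Z²] + E[Z⁴] = P + 3` give `E[(Y² / S - Z²)²] = 6 - 2(P + 3) / S = 4P / S`.
-/

open MeasureTheory ProbabilityTheory Real
open scoped NNReal

namespace ProbabilityTheory

lemma integrable_pow_gaussianReal (m : ℝ) (v : ℝ≥0) (n : ℕ) :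
    Integrable (fun x : ℝ ↦ x ^ n) (gaussianReal m v) := by
  refine (integrable_norm_iff (by fun_prop)).1 ?_
  simpa [norm_pow] using (memLp_id_gaussianReal (μ := m) (v := v) n).integrable_norm_pow'

lemma integrable_pow_mul_gaussianPDFReal (m : ℝ) {v : ℝ≥0} (hv : v ≠ 0) (n : ℕ) :
    Integrable (fun x ↦ x ^ n * gaussianPDFReal m v x) := by
  have h := integrable_pow_gaussianReal m v n
  rw [gaussianReal_of_var_ne_zero m hv,
    integrable_withDensity_iff_integrable_smul' (measurable_gaussianPDF m v)
      (ae_of_all _ fun _ ↦ gaussianPDF_lt_top)] at h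
  simpa [toReal_gaussianPDF, mul_comm] using h

lemma hasDerivAt_gaussianPDFReal (m : ℝ) (v : ℝ≥0) (x : ℝ) :
    HasDerivAt (gaussianPDFReal m v) (-((x - m) / v) * gaussianPDFReal m v x) x := by
  have h : HasDerivAt (fun x ↦ -(x - m) ^ 2 / (2 * v)) (-((x - m) / v)) x := by
    refine ((((hasDerivAt_id' x).sub_const m).fun_pow 2).neg.div_const
      (2 * (v : ℝ))).congr_deriv ?_
    rcases eq_or_ne (v : ℝ) 0 with hv | hv
    · simp [hv]
    · field_simp
      ring
  refine ((h.exp).const_mul (√(2 * π * v))⁻¹).congr_deriv ?_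
  rw [gaussianPDFReal_def]
  ring

/-- Integration by parts against `φ' x = -(x / v) * φ x`, `φ` the density of `N(0, v)`. -/
lemma integral_pow_add_two_gaussianReal (v : ℝ≥0) (n : ℕ) :
    ∫ x, x ^ (n + 2) ∂gaussianReal 0 v = (n + 1) * v * ∫ x, x ^ n ∂gaussianReal 0 v := by
  rcases eq_or_ne v 0 with rfl | hv
  · simp
  have hv' : (v : ℝ) ≠ 0 := by exact_mod_cast hv
  have hint := integrable_pow_mul_gaussianPDFReal 0 hv
  have hparts := integral_mul_deriv_eq_deriv_mul_of_integrable
    (u := fun x : ℝ ↦ x ^ (n + 1)) (u' := fun x ↦ (n + 1 : ℝ) * x ^ n)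
    (v := gaussianPDFReal 0 v) (v' := fun x ↦ -((x - 0) / v) * gaussianPDFReal 0 v x)
    (fun x _ ↦ by simpa using hasDerivAt_pow (n + 1) x)
    (fun x _ ↦ hasDerivAt_gaussianPDFReal 0 v x)
    (((hint (n + 2)).const_mul (-(v : ℝ)⁻¹)).congr (ae_of_all _ fun x ↦ by
      simp only [Pi.mul_apply]; field_simp; ring))
    (((hint n).const_mul (n + 1)).congr (ae_of_all _ fun x ↦ by simp only [Pi.mul_apply]; ring))
    (hint (n + 1))
  simp only [integral_gaussianReal_eq_integral_smul hv, smul_eq_mul]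
  have hlhs : ∀ x : ℝ, x ^ (n + 1) * (-((x - 0) / v) * gaussianPDFReal 0 v x)
      = -(v : ℝ)⁻¹ * (gaussianPDFReal 0 v x * x ^ (n + 2)) := fun x ↦ by field_simp; ring
  have hrhs : ∀ x : ℝ, (n + 1 : ℝ) * x ^ n * gaussianPDFReal 0 v x
      = (n + 1) * (gaussianPDFReal 0 v x * x ^ n) := fun x ↦ by ring
  simp only [hlhs, hrhs, integral_const_mul] at hparts
  field_simp at hparts
  linear_combination -hparts

lemma integral_sq_gaussianReal (v : ℝ≥0) : ∫ x, x ^ 2 ∂gaussianReal 0 v = v := by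
  simpa using integral_pow_add_two_gaussianReal v 0

lemma integral_pow_four_gaussianReal (v : ℝ≥0) : ∫ x, x ^ 4 ∂gaussianReal 0 v = 3 * v ^ 2 := by
  rw [integral_pow_add_two_gaussianReal v 2, integral_sq_gaussianReal]
  ring

variable {Ω : Type*} [MeasurableSpace Ω] {μ : Measure Ω} {X Y : Ω → ℝ}

lemma HasLaw.integral_pow {ν : Measure ℝ} (hX : HasLaw X ν μ) (n : ℕ) :
    ∫ ω, X ω ^ n ∂μ = ∫ x, x ^ n ∂ν :=
  hX.integral_comp (f := fun x ↦ x ^ n) (by fun_prop)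

lemma HasLaw.integrable_pow_of_gaussianReal {m : ℝ} {v : ℝ≥0}
    (hX : HasLaw X (gaussianReal m v) μ) (n : ℕ) : Integrable (fun ω ↦ X ω ^ n) μ := by
  have h := integrable_pow_gaussianReal m v n
  rwa [← hX.map_eq, integrable_map_measure (by fun_prop) hX.aemeasurable] at h

lemma IndepFun.hasLaw_add_gaussianReal {m₁ m₂ : ℝ} {v₁ v₂ : ℝ≥0} (hXY : IndepFun X Y μ)
    (hX : HasLaw X (gaussianReal m₁ v₁) μ) (hY : HasLaw Y (gaussianReal m₂ v₂) μ) :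
    HasLaw (fun ω ↦ X ω + Y ω) (gaussianReal (m₁ + m₂) (v₁ + v₂)) μ := by
  simpa [gaussianReal_conv_gaussianReal] using hXY.hasLaw_fun_add hX hY

end ProbabilityTheory

namespace GaussianChannel

noncomputable def infoDensity (p x y : ℝ) : ℝ :=
  1 / 2 * log (1 + p) - (y - x) ^ 2 / 2 + y ^ 2 / (2 * (1 + p))

lemma infoDensity_add (p w z : ℝ) : infoDensity p w (w + z)
    = 1 / 2 * log (1 + p) + ((w + z) ^ 2 / (1 + p) - z ^ 2) / 2 := by
  rw [infoDensity, ← div_div]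
  ring

variable {Ω : Type*} [MeasurableSpace Ω] {μ : Measure Ω} {W Z : Ω → ℝ} {p : ℝ≥0}
  (hW : HasLaw W (gaussianReal 0 p) μ) (hZ : HasLaw Z (gaussianReal 0 1) μ)
  (hWZ : IndepFun W Z μ)
include hW hZ hWZ

lemma hasLaw_add : HasLaw (fun ω ↦ W ω + Z ω) (gaussianReal 0 (p + 1)) μ := by
  simpa using hWZ.hasLaw_add_gaussianReal hW hZ

lemma integrable_pow_mul_pow (i j : ℕ) : Integrable (fun ω ↦ W ω ^ i * Z ω ^ j) μ :=
  (hWZ.comp (φ := fun x ↦ x ^ i) (ψ := fun x ↦ x ^ j) (by fun_prop) (by fun_prop)).integrable_mul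
    (hW.integrable_pow_of_gaussianReal i) (hZ.integrable_pow_of_gaussianReal j)

lemma integral_pow_mul_pow (i j : ℕ) : ∫ ω, W ω ^ i * Z ω ^ j ∂μ
    = (∫ x, x ^ i ∂gaussianReal 0 p) * ∫ x, x ^ j ∂gaussianReal 0 1 := by
  rw [hWZ.integral_fun_comp_mul_comp (f := fun x ↦ x ^ i) (g := fun x ↦ x ^ j)
    hW.aemeasurable hZ.aemeasurable (by fun_prop) (by fun_prop), hW.integral_pow, hZ.integral_pow]

lemma integrable_add_sq_mul_sq : Integrable (fun ω ↦ (W ω + Z ω) ^ 2 * Z ω ^ 2) μ := by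
  have hexp : ∀ ω, (W ω + Z ω) ^ 2 * Z ω ^ 2
      = W ω ^ 2 * Z ω ^ 2 + 2 * (W ω ^ 1 * Z ω ^ 3) + W ω ^ 0 * Z ω ^ 4 := fun ω ↦ by ring
  have hint := integrable_pow_mul_pow hW hZ hWZ
  simp_rw [hexp]
  exact ((hint 2 2).fun_add ((hint 1 3).const_mul 2)).fun_add (hint 0 4)

lemma integral_add_sq_mul_sq : ∫ ω, (W ω + Z ω) ^ 2 * Z ω ^ 2 ∂μ = p + 3 := by
  have hexp : ∀ ω, (W ω + Z ω) ^ 2 * Z ω ^ 2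
      = W ω ^ 2 * Z ω ^ 2 + 2 * (W ω ^ 1 * Z ω ^ 3) + W ω ^ 0 * Z ω ^ 4 := fun ω ↦ by ring
  have hint := integrable_pow_mul_pow hW hZ hWZ
  have hmom := integral_pow_mul_pow hW hZ hWZ
  simp_rw [hexp]
  rw [integral_add ((hint 2 2).fun_add ((hint 1 3).const_mul 2)) (hint 0 4),
    integral_add (hint 2 2) ((hint 1 3).const_mul 2), integral_const_mul, hmom, hmom, hmom]
  simp [integral_sq_gaussianReal, integral_pow_four_gaussianReal, integral_id_gaussianReal]

lemma integral_sq_div_sub_sq_sq :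
    ∫ ω, ((W ω + Z ω) ^ 2 / (1 + p) - Z ω ^ 2) ^ 2 ∂μ = 4 * p / (1 + p : ℝ) := by
  have hY := hasLaw_add hW hZ hWZ
  have hexp : ∀ ω, ((W ω + Z ω) ^ 2 / (1 + p) - Z ω ^ 2) ^ 2
      = (1 + p : ℝ)⁻¹ ^ 2 * (W ω + Z ω) ^ 4 - 2 / (1 + p) * ((W ω + Z ω) ^ 2 * Z ω ^ 2)
        + Z ω ^ 4 := fun ω ↦ by ring
  have hY4 := (hY.integrable_pow_of_gaussianReal 4).const_mul ((1 + p : ℝ)⁻¹ ^ 2)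
  have hYZ := (integrable_add_sq_mul_sq hW hZ hWZ).const_mul (2 / (1 + p : ℝ))
  simp_rw [hexp]
  rw [integral_add (hY4.sub' hYZ) (hZ.integrable_pow_of_gaussianReal 4), integral_sub hY4 hYZ,
    integral_const_mul, integral_const_mul, integral_add_sq_mul_sq hW hZ hWZ, hY.integral_pow,
    hZ.integral_pow, integral_pow_four_gaussianReal, integral_pow_four_gaussianReal]
  push_cast
  field_simp
  ring

lemma integral_infoDensity :
    ∫ ω, infoDensity p (W ω) (W ω + Z ω) ∂μ = 1 / 2 * log (1 + p) := by
  have hY := hasLaw_add hW hZ hWZ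
  have := hZ.isProbabilityMeasure
  simp_rw [infoDensity_add]
  have hY2 := (hY.integrable_pow_of_gaussianReal 2).div_const (1 + p : ℝ)
  have hZ2 := hZ.integrable_pow_of_gaussianReal 2
  rw [integral_add (integrable_const _) ((hY2.sub' hZ2).div_const 2), integral_const,
    probReal_univ, one_smul, integral_div, integral_sub hY2 hZ2, integral_div, hY.integral_pow,
    hZ.integral_pow, integral_sq_gaussianReal, integral_sq_gaussianReal]
  push_cast
  field_simp
  ring

lemma variance_infoDensity :
    Var[fun ω ↦ infoDensity p (W ω) (W ω + Z ω); μ] = p / (1 + p) := by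
  rw [variance_eq_integral (by unfold infoDensity; fun_prop), integral_infoDensity hW hZ hWZ]
  simp_rw [infoDensity_add, add_sub_cancel_left, div_pow, integral_div,
    integral_sq_div_sub_sq_sq hW hZ hWZ]
  ring

end GaussianChannel

theorem gaussian_mac_sum_information_density_moments_general
    {Ω : Type*} [MeasureSpace Ω]
    (P₁ P₂ : ℝ) (hP₁ : 0 < P₁) (hP₂ : 0 < P₂)
    (X₁ X₂ Z : Ω → ℝ) (hX₁ : Measurable X₁) (hX₂ : Measurable X₂) (hZ : Measurable Z)
    (hX₁law : Measure.map X₁ (ℙ : Measure Ω) = gaussianReal 0 (Real.toNNReal P₁))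
    (hX₂law : Measure.map X₂ (ℙ : Measure Ω) = gaussianReal 0 (Real.toNNReal P₂))
    (hZlaw : Measure.map Z (ℙ : Measure Ω) = gaussianReal 0 1)
    (hindep : iIndepFun
      ![X₁, X₂, Z] (ℙ : Measure Ω))
    (i₃ : ℝ → ℝ → ℝ → ℝ)
    (hi₃ : ∀ x₁ x₂ y, i₃ x₁ x₂ y = (1/2) * Real.log (1 + P₁ + P₂)
        - (y - x₁ - x₂)^2/2 + y^2/(2*(1 + P₁ + P₂))) :
    (∫ ω, i₃ (X₁ ω) (X₂ ω) (X₁ ω + X₂ ω + Z ω)) = (1/2) * Real.log (1 + P₁ + P₂) ∧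
    variance (fun ω => i₃ (X₁ ω) (X₂ ω) (X₁ ω + X₂ ω + Z ω)) (ℙ : Measure Ω)
      = (P₁ + P₂) / (1 + P₁ + P₂) := by
  have hmeas : ∀ i, Measurable (![X₁, X₂, Z] i) := fun i ↦ by fin_cases i <;> assumption
  have hW : HasLaw (fun ω ↦ X₁ ω + X₂ ω) (gaussianReal 0 (P₁.toNNReal + P₂.toNNReal)) := by
    simpa using (hindep.indepFun (i := 0) (j := 1) (by decide)).hasLaw_add_gaussianReal
      ⟨hX₁.aemeasurable, hX₁law⟩ ⟨hX₂.aemeasurable, hX₂law⟩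
  have hWZ : IndepFun (fun ω ↦ X₁ ω + X₂ ω) Z :=
    hindep.indepFun_add_left hmeas 0 1 2 (by decide) (by decide)
  have hp : ((P₁.toNNReal + P₂.toNNReal : ℝ≥0) : ℝ) = P₁ + P₂ := by
    simp [hP₁.le, hP₂.le]
  have hi : ∀ ω, i₃ (X₁ ω) (X₂ ω) (X₁ ω + X₂ ω + Z ω)
      = GaussianChannel.infoDensity (P₁ + P₂) (X₁ ω + X₂ ω) (X₁ ω + X₂ ω + Z ω) := fun ω ↦ by
    rw [hi₃, GaussianChannel.infoDensity, add_assoc 1]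
    ring
  simp_rw [hi, add_assoc (1 : ℝ), ← hp]
  exact ⟨GaussianChannel.integral_infoDensity hW ⟨hZ.aemeasurable, hZlaw⟩ hWZ,
    GaussianChannel.variance_infoDensity hW ⟨hZ.aemeasurable, hZlaw⟩ hWZ⟩

/-- For the Gaussian MAC `Y = X₁ + X₂ + Z` with `X₁ ~ N(0, P₁)`,
`X₂ ~ N(0, P₂)`, `Z ~ N(0, 1)` mutually independent, the sum-rate information density
`i₃(x₁, x₂, y) = (1/2) log (1 + P₁ + P₂) − (y − x₁ − x₂)²/2 + y²/(2(1 + P₁ + P₂))`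
satisfies `E[i₃(X₁, X₂, Y)] = (1/2) log (1 + P₁ + P₂)` and
`Var(i₃(X₁, X₂, Y)) = (P₁ + P₂)/(1 + P₁ + P₂)`. -/
theorem gaussian_mac_sum_information_density_moments
    {Ω : Type*} [MeasureSpace Ω] [IsProbabilityMeasure (ℙ : Measure Ω)]
    (P₁ P₂ : ℝ) (hP₁ : 0 < P₁) (hP₂ : 0 < P₂)
    (X₁ X₂ Z : Ω → ℝ) (hX₁ : Measurable X₁) (hX₂ : Measurable X₂) (hZ : Measurable Z)
    (hX₁law : Measure.map X₁ (ℙ : Measure Ω) = gaussianReal 0 (Real.toNNReal P₁))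
    (hX₂law : Measure.map X₂ (ℙ : Measure Ω) = gaussianReal 0 (Real.toNNReal P₂))
    (hZlaw : Measure.map Z (ℙ : Measure Ω) = gaussianReal 0 1)
    (hindep : iIndepFun
      ![X₁, X₂, Z] (ℙ : Measure Ω))
    (i₃ : ℝ → ℝ → ℝ → ℝ)
    (hi₃ : ∀ x₁ x₂ y, i₃ x₁ x₂ y = (1/2) * Real.log (1 + P₁ + P₂)
        - (y - x₁ - x₂)^2/2 + y^2/(2*(1 + P₁ + P₂))) :
    (∫ ω, i₃ (X₁ ω) (X₂ ω) (X₁ ω + X₂ ω + Z ω)) = (1/2) * Real.log (1 + P₁ + P₂) ∧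
    variance (fun ω => i₃ (X₁ ω) (X₂ ω) (X₁ ω + X₂ ω + Z ω)) (ℙ : Measure Ω)
      = (P₁ + P₂) / (1 + P₁ + P₂) :=
  gaussian_mac_sum_information_density_moments_general P₁ P₂ hP₁ hP₂ X₁ X₂ Z hX₁ hX₂ hZ hX₁law
    hX₂law hZlaw hindep i₃ hi₃
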